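/- Geometric convergence: if l ≥ 2, or if l = 1 and (1 ∉ A or b−1 ∉ A), then there exist a constant C > 0 and a ratio 0 < r < 1 such that for all m ≥ 1 the terms of the alternating series satisfy u_m β_{l,m+1} ≤ C r^m, where β_{l,k} = Σ_{n admissible, l(n)=l} n^{−k}. -/

import Mathlib

open MeasureTheory

def Admissible (b : ℕ) (A : Finset ℕ) (n : ℕ) : Prop :=
  (∀ d ∈ Nat.digits b n, d ∈ A) ∧ (n = 0 → 0 ∈ A)

instance (b : ℕ) (A : Finset ℕ) (n : ℕ) : Decidable (Admissible b A n) := by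
  unfold Admissible
  infer_instance

noncomputable def kempnerMeasure (b : ℕ) (A : Finset ℕ) : Measure ℝ :=
  if 0 ∈ A then
    Measure.sum fun l : ℕ =>
      ((b : ENNReal) ^ l)⁻¹ •
        Measure.sum fun n : {n : ℕ // Admissible b A n} =>
          Measure.dirac (((n : ℕ) : ℝ) / (b : ℝ) ^ l)
  else
    Measure.dirac 0 +
      Measure.sum fun l : ℕ =>
        ((b : ENNReal) ^ l)⁻¹ •
          Measure.sum
            (fun n : {n : ℕ // Admissible b A n ∧ l ≤ (Nat.digits b n).length} =>
              Measure.dirac (((n : ℕ) : ℝ) / (b : ℝ) ^ l))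

noncomputable def moment (b : ℕ) (A : Finset ℕ) (m : ℕ) : ℝ :=
  ∫ x in Set.Ico (0 : ℝ) 1, x ^ m ∂(kempnerMeasure b A)

noncomputable def kempnerSum (b : ℕ) (A : Finset ℕ) : ℝ :=
  ∑' n : {n : ℕ // 0 < n ∧ Admissible b A n}, (1 : ℝ) / ((n : ℕ) : ℝ)

/-! The moment `u_m` integrates `x ^ m` over `[0, 1)` against a measure that is finite there: the
level-`l` atoms in `[0, 1)` are at most `N ^ l` points of mass `b ^ (-l)`, and `N < b`. The sum
`β_{l,m+1}` has at most `b ^ l` terms, each at most `K ^ (-m)` when `K ≤ n` for all its `n`.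
If `l ≥ 2` take `K = b ^ (l - 1)`; if `l = 1` and `1 ∉ A` take `K = 2`. If `b - 1 ∉ A`, all digits
are at most `b - 2`, so an atom `n / b ^ k < 1` is at most `(b - 2) (b ^ k - 1) / ((b - 1) b ^ k)`:
the measure has no mass in `(ρ, 1)` for `ρ = (b - 2) / (b - 1) < 1`, and `u_m ≤ μ[0, 1) ρ ^ m`. -/

open Finset Set

theorem Nat.card_filter_digits_mem_le {b : ℕ} (hb : 1 < b) (A : Finset ℕ) (l : ℕ) :
    #{n ∈ range (b ^ l) |
        (∀ d ∈ Nat.digits b n, d ∈ A) ∧ (0 ∈ A ∨ (Nat.digits b n).length = l)} ≤ #A ^ l := by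
  induction l with
  | zero => exact (card_filter_le _ _).trans (by simp)
  | succ l ih =>
    calc _ ≤ #(A ×ˢ {n ∈ range (b ^ l) |
              (∀ d ∈ Nat.digits b n, d ∈ A) ∧ (0 ∈ A ∨ (Nat.digits b n).length = l)}) := by
          -- splitting off the last digit injects level `l + 1` into `A × (level l)`
          refine card_le_card_of_injOn (fun n => (n % b, n / b)) ?_ ?_
          · intro n hn
            simp only [coe_filter, Finset.mem_range, Set.mem_ofPred_eq, coe_product, Set.mem_prod,
              mem_coe] at hn ⊢
            obtain ⟨hlt, hdig, hlen⟩ := hn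
            rcases Nat.eq_zero_or_pos n with rfl | hn0
            · have h0 : 0 ∈ A := hlen.resolve_right (by simp)
              simpa [h0] using pow_pos (zero_lt_one.trans hb) l
            rw [Nat.digits_def' hb hn0] at hdig hlen
            refine ⟨hdig _ List.mem_cons_self, ?_, fun d hd => hdig d (List.mem_cons_of_mem _ hd),
              by simpa using hlen⟩
            rw [Nat.div_lt_iff_lt_mul (zero_lt_one.trans hb), ← pow_succ]
            exact hlt
          · intro x _ y _ hxy
            obtain ⟨hmod, hdiv⟩ := Prod.mk.inj hxy
            rw [← Nat.div_add_mod x b, hmod, hdiv, Nat.div_add_mod]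
      _ ≤ #A ^ (l + 1) := by
          rw [card_product, pow_succ']
          exact Nat.mul_le_mul_left _ ih

/-- That is, `n ≤ f * (1 + b + ⋯ + b ^ (l - 1))`. -/
theorem Nat.sub_one_mul_add_le_mul_pow_of_digits_le {b f : ℕ} (hb : 1 < b) (l : ℕ) {n : ℕ}
    (hf : ∀ d ∈ Nat.digits b n, d ≤ f) (hn : n < b ^ l) : (b - 1) * n + f ≤ f * b ^ l := by
  obtain ⟨c, rfl⟩ : ∃ c, b = c + 1 := ⟨b - 1, by omega⟩
  rw [Nat.add_sub_cancel]
  induction l generalizing n with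
  | zero => simp_all
  | succ l ih =>
    rcases Nat.eq_zero_or_pos n with rfl | hn0
    · simpa using Nat.le_mul_of_pos_right f (pow_pos (Nat.succ_pos c) _)
    rw [Nat.digits_def' hb hn0] at hf
    have hq := ih (fun d hd => hf d (List.mem_cons_of_mem _ hd))
      ((Nat.div_lt_iff_lt_mul (Nat.succ_pos c)).2 (by rwa [← pow_succ]))
    have hr := hf _ List.mem_cons_self
    have := Nat.mul_le_mul_left (c + 1) hq
    have := Nat.mul_le_mul_left c hr
    rw [← Nat.div_add_mod n (c + 1), pow_succ]
    nlinarith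

theorem Finset.sum_inv_pow_succ_le {s : Finset ℕ} {K : ℝ} (hK : 1 ≤ K) (hs : ∀ n ∈ s, K ≤ n)
    (m : ℕ) : ∑ n ∈ s, ((n : ℝ) ^ (m + 1))⁻¹ ≤ #s * K⁻¹ ^ m := by
  rw [← nsmul_eq_mul]
  refine Finset.sum_le_card_nsmul _ _ _ fun n hn => ?_
  have hKn := hs n hn
  rw [inv_pow]
  refine inv_anti₀ (by positivity) ((pow_le_pow_left₀ (by linarith) hKn m).trans ?_)
  exact pow_le_pow_right₀ (hK.trans hKn) m.le_succ

theorem MeasureTheory.Measure.sum_dirac_apply_le_card {α ι : Type*} [MeasurableSpace α]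
    {Q : ι → Prop} (x : ι → α) {s : Set α} (hs : MeasurableSet s) (F : Finset ι)
    (hF : ∀ i, Q i → x i ∈ s → i ∈ F) :
    Measure.sum (fun i : {i // Q i} => Measure.dirac (x i)) s ≤ #F := by
  rw [Measure.sum_apply _ hs]
  simp_rw [Measure.dirac_apply' _ hs]
  calc ∑' i : {i // Q i}, s.indicator 1 (x i)
      ≤ ∑' i : {i // Q i}, (F : Set ι).indicator (1 : ι → ENNReal) i :=
        ENNReal.tsum_le_tsum fun i => by
          by_cases h : x i ∈ s
          · simp [h, hF i i.2 h]
          · simp [h]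
    _ ≤ ∑' i : ι, (F : Set ι).indicator (1 : ι → ENNReal) i :=
        ENNReal.tsum_comp_le_tsum_of_injective Subtype.val_injective _
    _ = #F := by rw [← _root_.tsum_subtype]; simp

noncomputable def levelMeasure (b l : ℕ) (Q : ℕ → Prop) : Measure ℝ :=
  ((b : ENNReal) ^ l)⁻¹ • Measure.sum fun n : {n // Q n} =>
    Measure.dirac (((n : ℕ) : ℝ) / (b : ℝ) ^ l)

theorem kempnerMeasure_eq_levelMeasure (b : ℕ) (A : Finset ℕ) :
    kempnerMeasure b A =
      if 0 ∈ A then Measure.sum fun l => levelMeasure b l (Admissible b A)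
      else Measure.dirac 0 + Measure.sum fun l =>
        levelMeasure b l fun n => Admissible b A n ∧ l ≤ (Nat.digits b n).length :=
  rfl

theorem levelMeasure_Ico_le {b l : ℕ} (hb : 1 < b) {Q : ℕ → Prop} (F : Finset ℕ)
    (hF : ∀ n, Q n → n < b ^ l → n ∈ F) :
    levelMeasure b l Q (Ico 0 1) ≤ ((b : ENNReal) ^ l)⁻¹ * #F := by
  rw [levelMeasure, Measure.smul_apply, smul_eq_mul]
  refine mul_le_mul_right (Measure.sum_dirac_apply_le_card (Q := Q)
    (fun n : ℕ => (n : ℝ) / (b : ℝ) ^ l) measurableSet_Ico F fun n hn hx => hF n hn ?_) _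
  have := (div_lt_one (by positivity)).1 hx.2
  exact_mod_cast this

theorem ae_levelMeasure (b l : ℕ) (Q : ℕ → Prop) :
    ∀ᵐ x ∂levelMeasure b l Q, ∃ n, Q n ∧ x = n / (b : ℝ) ^ l := by
  refine Measure.ae_smul_measure (Measure.ae_sum_iff.2 fun n => ?_) _
  rw [Filter.Eventually, ae_dirac_eq]
  exact ⟨n, n.2, rfl⟩

theorem kempnerMeasure_Ico_lt_top {b : ℕ} (hb : 1 < b) {A : Finset ℕ} (hA : #A < b) :
    kempnerMeasure b A (Ico 0 1) < ⊤ := by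
  have hlevel : ∀ (l : ℕ) (Q : ℕ → Prop),
      (∀ n, Q n → n < b ^ l → (∀ d ∈ Nat.digits b n, d ∈ A) ∧
        (0 ∈ A ∨ (Nat.digits b n).length = l)) →
      levelMeasure b l Q (Ico 0 1) ≤ (#A / b) ^ l := by
    intro l Q hQ
    refine (levelMeasure_Ico_le hb _ fun n hn hlt =>
      mem_filter.2 ⟨Finset.mem_range.2 hlt, hQ n hn hlt⟩).trans ?_
    rw [div_eq_mul_inv, mul_pow, ENNReal.inv_pow, mul_comm]
    gcongr
    exact_mod_cast Nat.card_filter_digits_mem_le hb A l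
  have hgeo : ∑' l : ℕ, ((#A : ENNReal) / b) ^ l < ⊤ := by
    rw [ENNReal.tsum_geometric, ENNReal.inv_lt_top, tsub_pos_iff_lt,
      ENNReal.div_lt_iff (by simp; omega) (by simp), one_mul]
    exact_mod_cast hA
  rw [kempnerMeasure_eq_levelMeasure]
  split_ifs with h0
  · rw [Measure.sum_apply _ measurableSet_Ico]
    exact (ENNReal.tsum_le_tsum fun l => hlevel l _ fun n hn _ => ⟨hn.1, .inl h0⟩).trans_lt hgeo
  · rw [Measure.add_apply, Measure.sum_apply _ measurableSet_Ico]
    refine ENNReal.add_lt_top.2 ⟨measure_lt_top _ _, ?_⟩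
    refine (ENNReal.tsum_le_tsum fun l =>
      hlevel l _ fun n hn hlt => ⟨hn.1.1, .inr ?_⟩).trans_lt hgeo
    exact le_antisymm ((Nat.digits_length_le_iff hb n).2 hlt) hn.2

theorem ae_kempnerMeasure_exists_eq_div_pow (b : ℕ) (A : Finset ℕ) :
    ∀ᵐ x ∂kempnerMeasure b A,
      ∃ l n : ℕ, (∀ d ∈ Nat.digits b n, d ∈ A) ∧ x = n / (b : ℝ) ^ l := by
  have hlevel : ∀ (l : ℕ) (Q : ℕ → Prop), (∀ n, Q n → ∀ d ∈ Nat.digits b n, d ∈ A) →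
      ∀ᵐ x ∂levelMeasure b l Q, ∃ l n : ℕ, (∀ d ∈ Nat.digits b n, d ∈ A) ∧ x = n / (b : ℝ) ^ l :=
    fun l Q hQ => (ae_levelMeasure b l Q).mono fun _ ⟨n, hn, hx⟩ => ⟨l, n, hQ n hn, hx⟩
  rw [kempnerMeasure_eq_levelMeasure]
  split_ifs
  · exact Measure.ae_sum_iff.2 fun l => hlevel l _ fun n hn => hn.1
  · refine ae_add_measure_iff.2 ⟨?_, Measure.ae_sum_iff.2 fun l => hlevel l _ fun n hn => hn.1.1⟩
    rw [Filter.Eventually, ae_dirac_eq]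
    exact ⟨0, 0, by simp, by simp⟩

theorem setIntegral_Ico_pow_le {μ : Measure ℝ} (hμ : μ (Ico 0 1) ≠ ⊤) {ρ : ℝ}
    (hρ : ∀ᵐ x ∂μ, x < 1 → x ≤ ρ) (m : ℕ) :
    ∫ x in Ico 0 1, x ^ m ∂μ ≤ μ.real (Ico 0 1) * ρ ^ m := by
  have := isFiniteMeasure_restrict.2 hμ
  have hmem : ∀ᵐ x ∂μ.restrict (Ico 0 1), x ∈ Ico (0 : ℝ) 1 := ae_restrict_mem measurableSet_Ico
  have hint : IntegrableOn (fun x : ℝ => x ^ m) (Ico 0 1) μ := by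
    refine Measure.integrableOn_of_bounded hμ (continuous_pow m).aestronglyMeasurable (M := 1) ?_
    filter_upwards [hmem] with x hx
    rw [norm_pow, Real.norm_of_nonneg hx.1]
    exact pow_le_one₀ hx.1 hx.2.le
  calc ∫ x in Ico 0 1, x ^ m ∂μ ≤ ∫ _ in Ico 0 1, ρ ^ m ∂μ := by
        refine integral_mono_ae hint (integrable_const _) ?_
        filter_upwards [hmem, ae_restrict_of_ae hρ] with x hx hxρ
        exact pow_le_pow_left₀ hx.1 (hxρ hx.2) m
    _ = μ.real (Ico 0 1) * ρ ^ m := by rw [setIntegral_const, smul_eq_mul]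

def admissibleOfLength (b : ℕ) (A : Finset ℕ) (l : ℕ) : Finset ℕ :=
  {n ∈ range (b ^ l) | Admissible b A n ∧ (Nat.digits b n).length = l}

theorem card_admissibleOfLength_le (b : ℕ) (A : Finset ℕ) (l : ℕ) :
    #(admissibleOfLength b A l) ≤ b ^ l :=
  (card_filter_le _ _).trans (card_range _).le

theorem pow_pred_le_of_mem_admissibleOfLength {b : ℕ} (hb : 1 < b) {A : Finset ℕ} {l n : ℕ}
    (hl : l ≠ 0) (hn : n ∈ admissibleOfLength b A l) : b ^ (l - 1) ≤ n :=
  (Nat.lt_digits_length_iff hb n).1 (by rw [(mem_filter.1 hn).2.2]; omega)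

theorem Admissible.mem_of_lt {b : ℕ} {A : Finset ℕ} {n : ℕ} (hn : Admissible b A n) (h0 : n ≠ 0)
    (hnb : n < b) : n ∈ A :=
  hn.1 n (by simp [Nat.digits_of_lt b n h0 hnb])

theorem two_le_of_mem_admissibleOfLength_one {b : ℕ} {A : Finset ℕ} (h1 : 1 ∉ A) {n : ℕ}
    (hn : n ∈ admissibleOfLength b A 1) : 2 ≤ n := by
  obtain ⟨hnb, hadm, hlen⟩ := mem_filter.1 hn
  have h0 : n ≠ 0 := by rintro rfl; simp at hlen
  have hnA := hadm.mem_of_lt h0 (by simpa using hnb)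
  have h1n : n ≠ 1 := by rintro rfl; exact h1 hnA
  omega

theorem ae_kempnerMeasure_le_of_digits_le {b : ℕ} (hb : 1 < b) {A : Finset ℕ} {f : ℕ}
    (hf : ∀ a ∈ A, a ≤ f) : ∀ᵐ x ∂kempnerMeasure b A, x < 1 → x ≤ f / ((b : ℝ) - 1) := by
  filter_upwards [ae_kempnerMeasure_exists_eq_div_pow b A] with x ⟨l, n, hdig, hx⟩ hx1
  have hbl : (0 : ℝ) < (b : ℝ) ^ l := by positivity
  have hn : n < b ^ l := by
    rw [hx, div_lt_one hbl] at hx1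
    exact_mod_cast hx1
  have key : (((b - 1) * n + f : ℕ) : ℝ) ≤ ((f * b ^ l : ℕ) : ℝ) := by
    exact_mod_cast
      Nat.sub_one_mul_add_le_mul_pow_of_digits_le hb l (fun d hd => hf d (hdig d hd)) hn
  push_cast [Nat.cast_sub hb.le] at key
  have hb1 : (0 : ℝ) < (b : ℝ) - 1 := by
    have : (1 : ℝ) < b := by exact_mod_cast hb
    linarith
  rw [hx, div_le_div_iff₀ hbl hb1]
  nlinarith [Nat.cast_nonneg (α := ℝ) f]

theorem exists_lt_one_ae_kempnerMeasure_le {b : ℕ} (hb : 1 < b) {A : Finset ℕ}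
    (hA : A ⊆ range b) (hb1 : b - 1 ∉ A) :
    ∃ ρ : ℝ, 0 ≤ ρ ∧ ρ < 1 ∧ ∀ᵐ x ∂kempnerMeasure b A, x < 1 → x ≤ ρ := by
  have hbR : (1 : ℝ) < b := by exact_mod_cast hb
  refine ⟨((b - 2 : ℕ) : ℝ) / ((b : ℝ) - 1), div_nonneg (Nat.cast_nonneg _) (by linarith), ?_,
    ae_kempnerMeasure_le_of_digits_le hb fun a ha => ?_⟩
  · rw [div_lt_one (by linarith), Nat.cast_sub (by omega)]
    push_cast
    linarith
  · have := Finset.mem_range.1 (hA ha)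
    have : a ≠ b - 1 := by rintro rfl; exact hb1 ha
    omega

theorem kempner_geometric_convergence_general (b : ℕ) (hb : 1 < b) (A : Finset ℕ)
    (hA : A ⊂ Finset.range b)
    (l : ℕ)
    (hcase : 2 ≤ l ∨ (l = 1 ∧ (1 ∉ A ∨ b - 1 ∉ A))) :
    ∃ C > (0 : ℝ), ∃ r : ℝ, 0 < r ∧ r < 1 ∧
      ∀ m : ℕ, 1 ≤ m →
        moment b A m *
            ∑ n ∈ (Finset.range (b ^ l)).filter
                (fun n => Admissible b A n ∧ (Nat.digits b n).length = l),
              ((n : ℝ) ^ (m + 1))⁻¹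
          ≤ C * r ^ m := by
  obtain ⟨ρ, K, hρ, hK, hρK, hgap, hlower⟩ : ∃ ρ K : ℝ, 0 ≤ ρ ∧ 1 ≤ K ∧ ρ < K ∧
      (∀ᵐ x ∂kempnerMeasure b A, x < 1 → x ≤ ρ) ∧ ∀ n ∈ admissibleOfLength b A l, K ≤ n := by
    have hbR : (1 : ℝ) < b := by exact_mod_cast hb
    have hnogap : ∀ᵐ x ∂kempnerMeasure b A, x < 1 → x ≤ 1 := ae_of_all _ fun _ => le_of_lt
    rcases hcase with hl | ⟨rfl, h1 | hb1⟩
    · exact ⟨1, b ^ (l - 1), zero_le_one, one_le_pow₀ hbR.le, one_lt_pow₀ hbR (by omega),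
        hnogap,
        fun n hn => by exact_mod_cast pow_pred_le_of_mem_admissibleOfLength hb (by omega) hn⟩
    · exact ⟨1, 2, zero_le_one, one_le_two, one_lt_two, hnogap,
        fun n hn => by exact_mod_cast two_le_of_mem_admissibleOfLength_one h1 hn⟩
    · obtain ⟨ρ, hρ0, hρ1, hgap⟩ := exists_lt_one_ae_kempnerMeasure_le hb hA.1 hb1
      exact ⟨ρ, 1, hρ0, le_rfl, hρ1, hgap,
        fun n hn => by exact_mod_cast pow_pred_le_of_mem_admissibleOfLength hb one_ne_zero hn⟩
  have hμ := kempnerMeasure_Ico_lt_top hb (by simpa using Finset.card_lt_card hA)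
  set M := (kempnerMeasure b A).real (Ico 0 1)
  -- `ρ = 0` is possible (`b = 2`), hence the floor `1 / 2` on the ratio.
  refine ⟨(M + 1) * b ^ l, by positivity, max (ρ / K) (1 / 2), by positivity,
    max_lt ((div_lt_one (by linarith)).2 hρK) (by norm_num), fun m _ => ?_⟩
  calc moment b A m * ∑ n ∈ admissibleOfLength b A l, ((n : ℝ) ^ (m + 1))⁻¹
      ≤ (M * ρ ^ m) * (#(admissibleOfLength b A l) * K⁻¹ ^ m) :=
        mul_le_mul (setIntegral_Ico_pow_le hμ.ne hgap m) (sum_inv_pow_succ_le hK hlower m)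
          (by positivity) (by positivity)
    _ = M * #(admissibleOfLength b A l) * (ρ / K) ^ m := by ring
    _ ≤ (M + 1) * b ^ l * max (ρ / K) (1 / 2) ^ m := by
        gcongr
        · linarith
        · exact_mod_cast card_admissibleOfLength_le b A l
        · exact le_max_left _ _

theorem kempner_geometric_convergence (b : ℕ) (hb : 1 < b) (A : Finset ℕ)
    (hA : A ⊂ Finset.range b) (hAne : A.Nonempty) (hA0 : A ≠ {0})
    (l : ℕ) (hl : 1 ≤ l)
    (hcase : 2 ≤ l ∨ (l = 1 ∧ (1 ∉ A ∨ b - 1 ∉ A))) :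
    ∃ C > (0 : ℝ), ∃ r : ℝ, 0 < r ∧ r < 1 ∧
      ∀ m : ℕ, 1 ≤ m →
        moment b A m *
            ∑ n ∈ (Finset.range (b ^ l)).filter
                (fun n => Admissible b A n ∧ (Nat.digits b n).length = l),
              ((n : ℝ) ^ (m + 1))⁻¹
          ≤ C * r ^ m :=
  kempner_geometric_convergence_general b hb A hA l hcase
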